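/- arXiv:2409.08354 — 4 statements merged into one kernel-verified Lean document; each statement's English description precedes it below -/
import Mathlib

section
/- Let n ≥ p₁ and k ≥ p₂ be positive integers. Let A be an n×p₁ real matrix that is lower trapezoidal with unit diagonal, and let B be a k×p₂ real matrix that is lower trapezoidal with strictly positive diagonal. Suppose C is an invertible p₁×p₁ real matrix and D is an invertible p₂×p₂ real matrix such that: (i) A·C⁻¹ is lower trapezoidal with unit diagonal; (ii) B·D⁻¹ is lower trapezoidal with strictly positive diagonal; and (iii) the Kronecker product D ⊗ C is orthogonal, i.e. (D ⊗ C)(D ⊗ C)ᵀ equals the identity matrix. Then C = I and D = I. (Proposition 1: under Assumptions 1–3, the only rotations of the matrix dynamic factor model preserving the loading restrictions and the identity innovation covariance are trivial, so the factors and loadings are uniquely identified.) -/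
open Matrix
open scoped Kronecker

/-- Lower-trapezoidal with unit diagonal `A` and lower-trapezoidal `A * M` force
`M` to be lower triangular. -/
lemma trap_zero {n p : ℕ} (hn : p ≤ n) (A : Matrix (Fin n) (Fin p) ℝ)
    (M : Matrix (Fin p) (Fin p) ℝ)
    (hA1 : ∀ j : Fin p, A (Fin.castLE hn j) j ≠ 0)
    (hA0 : ∀ (i : Fin n) (j : Fin p), (i : ℕ) < (j : ℕ) → A i j = 0)
    (h0 : ∀ (i : Fin n) (j : Fin p), (i : ℕ) < (j : ℕ) → (A * M) i j = 0) :
    ∀ i j : Fin p, (i : ℕ) < (j : ℕ) → M i j = 0 := by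
  suffices h : ∀ m : ℕ, ∀ i j : Fin p, (i : ℕ) = m → (i : ℕ) < (j : ℕ) → M i j = 0 by
    intro i j hij; exact h i i j rfl hij
  intro m
  induction m using Nat.strongRecOn with
  | ind m IH =>
    intro i j him hij
    have he := h0 (Fin.castLE hn i) j (by simpa using hij)
    rw [Matrix.mul_apply, Finset.sum_eq_single i] at he
    · exact (mul_eq_zero.mp he).resolve_left (hA1 i)
    · intro l _ hl
      rcases lt_or_gt_of_ne (fun h => hl (Fin.ext h) : (l : ℕ) ≠ (i : ℕ)) with h' | h'
      · rw [IH l (him ▸ h') l j rfl (h'.trans hij), mul_zero]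
      · rw [hA0 _ _ (by simpa using h'), zero_mul]
    · intro h; exact absurd (Finset.mem_univ i) h

/-- If `M` is lower triangular, the top-block diagonal entry of `A * M`. -/
lemma trap_diag {n p : ℕ} (hn : p ≤ n) (A : Matrix (Fin n) (Fin p) ℝ)
    (M : Matrix (Fin p) (Fin p) ℝ)
    (hA0 : ∀ (i : Fin n) (j : Fin p), (i : ℕ) < (j : ℕ) → A i j = 0)
    (hMz : ∀ i j : Fin p, (i : ℕ) < (j : ℕ) → M i j = 0) (j : Fin p) :
    (A * M) (Fin.castLE hn j) j = A (Fin.castLE hn j) j * M j j := by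
  rw [Matrix.mul_apply, Finset.sum_eq_single j]
  · intro l _ hl
    rcases lt_or_gt_of_ne (fun h => hl (Fin.ext h) : (l : ℕ) ≠ (j : ℕ)) with h' | h'
    · rw [hMz l j h', mul_zero]
    · rw [hA0 _ _ (by simpa using h'), zero_mul]
  · intro h; exact absurd (Finset.mem_univ j) h

/-- A lower triangular real matrix with positive diagonal and orthonormal rows
is the identity. -/
lemma lowerTri_orth {p : ℕ} (M : Matrix (Fin p) (Fin p) ℝ)
    (h0 : ∀ i j : Fin p, (i : ℕ) < (j : ℕ) → M i j = 0)
    (hd : ∀ j, 0 < M j j) (h : M * Mᵀ = 1) : M = 1 := by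
  have rows : ∀ m : ℕ, ∀ i : Fin p, (i : ℕ) = m →
      ((∀ l : Fin p, l ≠ i → M i l = 0) ∧ M i i = 1) := by
    intro m
    induction m using Nat.strongRecOn with
    | ind m IH =>
      intro i him
      have hzall : ∀ l : Fin p, l ≠ i → M i l = 0 := by
        intro l hl
        rcases lt_or_gt_of_ne (fun h => hl (Fin.ext h) : (l : ℕ) ≠ (i : ℕ)) with h' | h'
        · -- l < i : use orthogonality of row i with earlier row l
          have hrow := IH l (him ▸ h') l rfl
          have he := congrFun (congrFun h i) l
          rw [Matrix.mul_apply, Matrix.one_apply_ne (Ne.symm hl)] at he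
          · rw [Finset.sum_eq_single l] at he
            · rw [Matrix.transpose_apply, hrow.2, mul_one] at he; exact he
            · intro m' _ hm'
              rw [Matrix.transpose_apply, hrow.1 m' hm', mul_zero]
            · intro hna; exact absurd (Finset.mem_univ l) hna
        · exact h0 i l h'
      refine ⟨hzall, ?_⟩
      have he := congrFun (congrFun h i) i
      rw [Matrix.mul_apply, Matrix.one_apply_eq, Finset.sum_eq_single i] at he
      · rw [Matrix.transpose_apply] at he
        nlinarith [hd i]
      · intro m' _ hm'
        rw [hzall m' hm', zero_mul]
      · intro hna; exact absurd (Finset.mem_univ i) hna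
  ext i j
  by_cases hij : i = j
  · subst hij; rw [(rows i i rfl).2, Matrix.one_apply_eq]
  · rw [(rows i i rfl).1 j (Ne.symm hij), Matrix.one_apply_ne hij]

/-- **Proposition 1 (identification).** If `A` is lower trapezoidal with unit diagonal,
`B` is lower trapezoidal with strictly positive diagonal, `C`, `D` are invertible,
`A * C⁻¹` is again lower trapezoidal with unit diagonal, `B * D⁻¹` is again lower
trapezoidal with strictly positive diagonal, and the Kronecker product `D ⊗ₖ C` is
orthogonal, then `C = 1` and `D = 1`. -/
theorem matrix_dfm_identification_prop1 {n k p₁ p₂ : ℕ}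
    (hp₁ : 0 < p₁) (hp₂ : 0 < p₂) (hn : p₁ ≤ n) (hk : p₂ ≤ k)
    (A : Matrix (Fin n) (Fin p₁) ℝ) (B : Matrix (Fin k) (Fin p₂) ℝ)
    (C : Matrix (Fin p₁) (Fin p₁) ℝ) (D : Matrix (Fin p₂) (Fin p₂) ℝ)
    (hC : IsUnit C.det) (hD : IsUnit D.det)
    (hA1 : ∀ j : Fin p₁, A (Fin.castLE hn j) j = 1)
    (hA0 : ∀ (i : Fin n) (j : Fin p₁), (i : ℕ) < (j : ℕ) → A i j = 0)
    (hB1 : ∀ j : Fin p₂, 0 < B (Fin.castLE hk j) j)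
    (hB0 : ∀ (i : Fin k) (j : Fin p₂), (i : ℕ) < (j : ℕ) → B i j = 0)
    (hAC1 : ∀ j : Fin p₁, (A * C⁻¹) (Fin.castLE hn j) j = 1)
    (hAC0 : ∀ (i : Fin n) (j : Fin p₁), (i : ℕ) < (j : ℕ) → (A * C⁻¹) i j = 0)
    (hBD1 : ∀ j : Fin p₂, 0 < (B * D⁻¹) (Fin.castLE hk j) j)
    (hBD0 : ∀ (i : Fin k) (j : Fin p₂), (i : ℕ) < (j : ℕ) → (B * D⁻¹) i j = 0)
    (horth : (D ⊗ₖ C) * (D ⊗ₖ C)ᵀ = 1) :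
    C = 1 ∧ D = 1 := by
  -- the Kronecker orthogonality, entrywise
  have key : ∀ (i j : Fin p₂) (kk ll : Fin p₁),
      (D * Dᵀ) i j * (C * Cᵀ) kk ll = if i = j ∧ kk = ll then 1 else 0 := by
    intro i j kk ll
    have h := congrFun (congrFun horth (i, kk)) (j, ll)
    simp only [Matrix.mul_apply, Matrix.transpose_apply, Matrix.kroneckerMap_apply,
      Fintype.sum_prod_type, Matrix.one_apply, Prod.mk.injEq] at h
    rw [Matrix.mul_apply, Matrix.mul_apply, Finset.sum_mul_sum, ← h]
    apply Finset.sum_congr rfl; intro a _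
    apply Finset.sum_congr rfl; intro b _
    simp only [Matrix.transpose_apply]; ring
  set i0 : Fin p₂ := ⟨0, hp₂⟩ with hi0
  set k0 : Fin p₁ := ⟨0, hp₁⟩ with hk0
  set q : ℝ := (D * Dᵀ) i0 i0 with hqdef
  have hq1 : q * (C * Cᵀ) k0 k0 = 1 := by simpa using key i0 i0 k0 k0
  have hq0 : q ≠ 0 := left_ne_zero_of_mul_eq_one hq1
  have hP : C * Cᵀ = q⁻¹ • (1 : Matrix (Fin p₁) (Fin p₁) ℝ) := by
    ext kk ll
    have h := key i0 i0 kk ll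
    simp only [true_and] at h
    rw [Matrix.smul_apply, Matrix.one_apply, ← h, smul_eq_mul, inv_mul_cancel_left₀ hq0]
  -- properties of M = C⁻¹
  set M : Matrix (Fin p₁) (Fin p₁) ℝ := C⁻¹ with hMdef
  have hMz : ∀ i j : Fin p₁, (i : ℕ) < (j : ℕ) → M i j = 0 :=
    trap_zero hn A M (fun j => by rw [hA1 j]; exact one_ne_zero) hA0 hAC0
  have hMd : ∀ j, M j j = 1 := by
    intro j
    have h := hAC1 j
    rw [trap_diag hn A M hA0 hMz j, hA1 j, one_mul] at h
    exact h
  have hMC : M * C = 1 := Matrix.nonsing_inv_mul C hC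
  have hMMT : M * Mᵀ = q • (1 : Matrix (Fin p₁) (Fin p₁) ℝ) := by
    have h1 : M * (C * Cᵀ) * Mᵀ = 1 := by
      calc M * (C * Cᵀ) * Mᵀ = (M * C) * (Cᵀ * Mᵀ) := by simp only [Matrix.mul_assoc]
        _ = (M * C) * (M * C)ᵀ := by rw [Matrix.transpose_mul]
        _ = 1 := by rw [hMC]; simp
    rw [hP, Matrix.mul_smul, Matrix.smul_mul, Matrix.mul_one] at h1
    rw [← h1, smul_smul, mul_inv_cancel₀ hq0, one_smul]
  have hq : q = 1 := by
    have h00 : (M * Mᵀ) k0 k0 = 1 := by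
      rw [Matrix.mul_apply, Finset.sum_eq_single k0]
      · rw [Matrix.transpose_apply, hMd k0, mul_one]
      · intro l _ hl
        have hpos : (0 : ℕ) < (l : ℕ) :=
          Nat.pos_of_ne_zero (fun hc => hl (Fin.ext (by simpa [hk0] using hc)))
        rw [hMz k0 l (by simpa [hk0] using hpos), zero_mul]
      · intro hna; exact absurd (Finset.mem_univ k0) hna
    rw [hMMT] at h00
    simpa using h00
  have hMM1 : M * Mᵀ = 1 := by rw [hMMT, hq, one_smul]
  have hM1 : M = 1 := lowerTri_orth M hMz (fun j => by rw [hMd j]; exact one_pos) hMM1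
  have hC1 : C = 1 := by
    have h := Matrix.nonsing_inv_nonsing_inv C hC
    rw [← h, show C⁻¹ = M from rfl, hM1]; simp
  -- now D
  have hPCC : C * Cᵀ = 1 := by rw [hC1]; simp
  have hQ : D * Dᵀ = 1 := by
    ext i j
    have h := key i j k0 k0
    rw [hPCC, Matrix.one_apply_eq, mul_one] at h
    rw [h, Matrix.one_apply]
    simp
  set N : Matrix (Fin p₂) (Fin p₂) ℝ := D⁻¹ with hNdef
  have hNz : ∀ i j : Fin p₂, (i : ℕ) < (j : ℕ) → N i j = 0 :=
    trap_zero hk B N (fun j => ne_of_gt (hB1 j)) hB0 hBD0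
  have hNd : ∀ j : Fin p₂, 0 < N j j := by
    intro j
    have h := hBD1 j
    rw [trap_diag hk B N hB0 hNz j] at h
    by_contra hc
    push_neg at hc
    nlinarith [hB1 j]
  have hND : N * D = 1 := Matrix.nonsing_inv_mul D hD
  have hNN : N * Nᵀ = 1 := by
    calc N * Nᵀ = N * (D * Dᵀ) * Nᵀ := by rw [hQ, Matrix.mul_one]
      _ = (N * D) * (Dᵀ * Nᵀ) := by simp only [Matrix.mul_assoc]
      _ = (N * D) * (N * D)ᵀ := by rw [Matrix.transpose_mul]
      _ = 1 := by rw [hND]; simp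
  have hN1 : N = 1 := lowerTri_orth N hNz hNd hNN
  have hD1 : D = 1 := by
    have h := Matrix.nonsing_inv_nonsing_inv D hD
    rw [← h, show D⁻¹ = N from rfl, hN1]; simp
  exact ⟨hC1, hD1⟩
end

section
/- Let n ≥ p₁ and k ≥ p₂ be positive integers. Let A be an n×p₁ real matrix and B a k×p₂ real matrix, both lower trapezoidal with unit diagonal. Suppose C is an invertible p₁×p₁ real matrix, D is an invertible p₂×p₂ real matrix, and Λ is a (p₁p₂)×(p₁p₂) diagonal real matrix with strictly positive diagonal entries, such that: (i) A·C⁻¹ is lower trapezoidal with unit diagonal; (ii) B·D⁻¹ is lower trapezoidal with unit diagonal; and (iii) (D ⊗ C) Λ (D ⊗ C)ᵀ is a diagonal matrix. Then C = I and D = I. -/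
open Matrix
open scoped Kronecker

/-- If `N` is unit lower triangular, `G` is unit lower triangular, and `N * M = G`,
then `M` is unit lower triangular (forward substitution). -/
private lemma unitLT_of_mul {p : ℕ} (N M G : Matrix (Fin p) (Fin p) ℝ)
    (hN0 : ∀ i j : Fin p, (i : ℕ) < (j : ℕ) → N i j = 0)
    (hG1 : ∀ i, G i i = 1) (hG0 : ∀ i j : Fin p, (i : ℕ) < (j : ℕ) → G i j = 0)
    (hN1 : ∀ i, N i i = 1)
    (h : N * M = G) :
    (∀ i, M i i = 1) ∧ (∀ i j : Fin p, (i : ℕ) < (j : ℕ) → M i j = 0) := by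
  have hz : ∀ t : ℕ, ∀ i j : Fin p, (i : ℕ) = t → (i : ℕ) < (j : ℕ) → M i j = 0 := by
    intro t
    induction t using Nat.strong_induction_on with
    | _ t IH =>
      intro i j hit hij
      have hrow : ∑ s, N i s * M s j = G i j := by
        rw [← h, Matrix.mul_apply]
      have hsingle : ∑ s, N i s * M s j = N i i * M i j := by
        refine Finset.sum_eq_single i ?_ (by simp)
        intro s _ hsi
        rcases lt_trichotomy (s : ℕ) (i : ℕ) with hlt | heq | hgt
        · have : M s j = 0 := IH (s : ℕ) (hit ▸ hlt) s j rfl (lt_trans hlt hij)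
          simp [this]
        · exact absurd (Fin.ext heq) hsi
        · simp [hN0 i s hgt]
      have := hrow
      rw [hsingle, hN1 i, one_mul, hG0 i j hij] at this
      exact this
  have hz' : ∀ i j : Fin p, (i : ℕ) < (j : ℕ) → M i j = 0 := fun i j => hz (i : ℕ) i j rfl
  refine ⟨?_, hz'⟩
  intro j
  have hrow : ∑ s, N j s * M s j = G j j := by
    rw [← h, Matrix.mul_apply]
  have hsingle : ∑ s, N j s * M s j = N j j * M j j := by
    refine Finset.sum_eq_single j ?_ (by simp)
    intro s _ hsj
    rcases lt_trichotomy (s : ℕ) (j : ℕ) with hlt | heq | hgt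
    · simp [hz' s j hlt]
    · exact absurd (Fin.ext heq) hsj
    · simp [hN0 j s hgt]
  rw [hsingle, hN1 j, one_mul, hG1 j] at hrow
  exact hrow

/-- **Proposition 2 (identification).** If `A` and `B` are lower trapezoidal with unit
diagonal, `C`, `D` are invertible, `A * C⁻¹` and `B * D⁻¹` are again lower trapezoidal
with unit diagonal, `Λ` is diagonal with strictly positive diagonal entries, and
`(D ⊗ₖ C) * Λ * (D ⊗ₖ C)ᵀ` is diagonal, then `C = 1` and `D = 1`. -/
theorem matrix_dfm_identification_prop2 {n k p₁ p₂ : ℕ}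
    (hp₁ : 0 < p₁) (hp₂ : 0 < p₂) (hn : p₁ ≤ n) (hk : p₂ ≤ k)
    (A : Matrix (Fin n) (Fin p₁) ℝ) (B : Matrix (Fin k) (Fin p₂) ℝ)
    (C : Matrix (Fin p₁) (Fin p₁) ℝ) (D : Matrix (Fin p₂) (Fin p₂) ℝ)
    (hC : IsUnit C.det) (hD : IsUnit D.det)
    (lam : Fin p₂ × Fin p₁ → ℝ) (hlam : ∀ q, 0 < lam q)
    (Lam : Matrix (Fin p₂ × Fin p₁) (Fin p₂ × Fin p₁) ℝ)
    (hLam : Lam = Matrix.diagonal lam)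
    (hA1 : ∀ j : Fin p₁, A (Fin.castLE hn j) j = 1)
    (hA0 : ∀ (i : Fin n) (j : Fin p₁), (i : ℕ) < (j : ℕ) → A i j = 0)
    (hB1 : ∀ j : Fin p₂, B (Fin.castLE hk j) j = 1)
    (hB0 : ∀ (i : Fin k) (j : Fin p₂), (i : ℕ) < (j : ℕ) → B i j = 0)
    (hAC1 : ∀ j : Fin p₁, (A * C⁻¹) (Fin.castLE hn j) j = 1)
    (hAC0 : ∀ (i : Fin n) (j : Fin p₁), (i : ℕ) < (j : ℕ) → (A * C⁻¹) i j = 0)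
    (hBD1 : ∀ j : Fin p₂, (B * D⁻¹) (Fin.castLE hk j) j = 1)
    (hBD0 : ∀ (i : Fin k) (j : Fin p₂), (i : ℕ) < (j : ℕ) → (B * D⁻¹) i j = 0)
    (hdiag : ((D ⊗ₖ C) * Lam * (D ⊗ₖ C)ᵀ).IsDiag) :
    C = 1 ∧ D = 1 := by
  -- Step 1a: C⁻¹ is unit lower triangular
  have hCinv := unitLT_of_mul (A.submatrix (Fin.castLE hn) id) C⁻¹
      ((A * C⁻¹).submatrix (Fin.castLE hn) id)
      (fun i j hij => by simpa using hA0 (Fin.castLE hn i) j (by simpa using hij))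
      (fun i => by simpa using hAC1 i)
      (fun i j hij => by simpa using hAC0 (Fin.castLE hn i) j (by simpa using hij))
      (fun i => by simpa using hA1 i)
      (by ext i j; simp [Matrix.mul_apply])
  -- Step 1b: C is unit lower triangular
  have hCLT := unitLT_of_mul C⁻¹ C 1 hCinv.2
      (fun i => Matrix.one_apply_eq i)
      (fun i j hij => Matrix.one_apply_ne (fun h => absurd (congrArg Fin.val h) (Nat.ne_of_lt hij)))
      hCinv.1 (Matrix.nonsing_inv_mul C hC)
  -- Step 1c/1d: D⁻¹ and D are unit lower triangular
  have hDinv := unitLT_of_mul (B.submatrix (Fin.castLE hk) id) D⁻¹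
      ((B * D⁻¹).submatrix (Fin.castLE hk) id)
      (fun i j hij => by simpa using hB0 (Fin.castLE hk i) j (by simpa using hij))
      (fun i => by simpa using hBD1 i)
      (fun i j hij => by simpa using hBD0 (Fin.castLE hk i) j (by simpa using hij))
      (fun i => by simpa using hB1 i)
      (by ext i j; simp [Matrix.mul_apply])
  have hDLT := unitLT_of_mul D⁻¹ D 1 hDinv.2
      (fun i => Matrix.one_apply_eq i)
      (fun i j hij => Matrix.one_apply_ne (fun h => absurd (congrArg Fin.val h) (Nat.ne_of_lt hij)))
      hDinv.1 (Matrix.nonsing_inv_mul D hD)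
  -- M := D ⊗ₖ C
  set M : Matrix (Fin p₂ × Fin p₁) (Fin p₂ × Fin p₁) ℝ := D ⊗ₖ C with hM
  have hMapp : ∀ q r : Fin p₂ × Fin p₁, M q r = D q.1 r.1 * C q.2 r.2 := by
    intro q r; simp [hM, Matrix.kroneckerMap_apply]
  have hMdiag : ∀ q : Fin p₂ × Fin p₁, M q q = 1 := by
    intro q; rw [hMapp, hDLT.1, hCLT.1, one_mul]
  have hMtri : ∀ q r : Fin p₂ × Fin p₁,
      ((r.1 : ℕ) > (q.1 : ℕ) ∨ (r.2 : ℕ) > (q.2 : ℕ)) → M q r = 0 := by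
    intro q r h
    rcases h with h | h
    · rw [hMapp, hDLT.2 q.1 r.1 h, zero_mul]
    · rw [hMapp, hCLT.2 q.2 r.2 h, mul_zero]
  -- entries of M Λ Mᵀ
  have hentry : ∀ q r : Fin p₂ × Fin p₁,
      ((D ⊗ₖ C) * Lam * (D ⊗ₖ C)ᵀ) q r = ∑ s, M q s * lam s * M r s := by
    intro q r
    rw [hLam, Matrix.mul_apply]
    simp only [Matrix.transpose_apply, Matrix.mul_diagonal, hM]
  -- Step 2: off-diagonal entries of M vanish
  have key : ∀ t : ℕ, ∀ r : Fin p₂ × Fin p₁, (r.1 : ℕ) * p₁ + (r.2 : ℕ) = t →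
      ∀ q : Fin p₂ × Fin p₁, q ≠ r → M q r = 0 := by
    intro t
    induction t using Nat.strong_induction_on with
    | _ t IH =>
      intro r hrt q hqr
      have h0 : ∑ s, M q s * lam s * M r s = 0 := by
        rw [← hentry q r]; exact hdiag hqr
      have hsingle : ∑ s, M q s * lam s * M r s = M q r * lam r * M r r := by
        refine Finset.sum_eq_single r ?_ (by simp)
        intro s _ hsr
        have hMrs : M r s = 0 := by
          by_cases hle : (s.1 : ℕ) ≤ (r.1 : ℕ) ∧ (s.2 : ℕ) ≤ (r.2 : ℕ)
          · -- rank s < rank r, use IH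
            have hrank : (s.1 : ℕ) * p₁ + (s.2 : ℕ) < (r.1 : ℕ) * p₁ + (r.2 : ℕ) := by
              rcases lt_or_eq_of_le hle.1 with h1 | h1
              · calc (s.1 : ℕ) * p₁ + (s.2 : ℕ)
                    < (s.1 : ℕ) * p₁ + p₁ := Nat.add_lt_add_left s.2.isLt _
                  _ = ((s.1 : ℕ) + 1) * p₁ := by ring
                  _ ≤ (r.1 : ℕ) * p₁ := Nat.mul_le_mul_right p₁ (Nat.succ_le_of_lt h1)
                  _ ≤ (r.1 : ℕ) * p₁ + (r.2 : ℕ) := Nat.le_add_right _ _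
              · have h2 : (s.2 : ℕ) < (r.2 : ℕ) := by
                  rcases lt_or_eq_of_le hle.2 with h2 | h2
                  · exact h2
                  · exact absurd (Prod.ext (Fin.ext h1) (Fin.ext h2)) hsr
                rw [h1]
                omega
            exact IH _ (hrt ▸ hrank) s rfl r (Ne.symm hsr)
          · rw [not_and_or] at hle
            push_neg at hle
            exact hMtri r s hle
        simp [hMrs]
      rw [hsingle, hMdiag r, mul_one] at h0
      exact (mul_eq_zero.mp h0).resolve_right (ne_of_gt (hlam r))
  have hMoff : ∀ q r : Fin p₂ × Fin p₁, q ≠ r → M q r = 0 :=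
    fun q r h => key _ r rfl q h
  constructor
  · ext i j
    by_cases hij : i = j
    · subst hij; rw [hCLT.1, Matrix.one_apply_eq]
    · have := hMoff (⟨0, hp₂⟩, i) (⟨0, hp₂⟩, j) (by simp [Prod.ext_iff, hij])
      rw [hMapp, hDLT.1, one_mul] at this
      rw [this, Matrix.one_apply_ne hij]
  · ext i j
    by_cases hij : i = j
    · subst hij; rw [hDLT.1, Matrix.one_apply_eq]
    · have := hMoff ((i, ⟨0, hp₁⟩) : Fin p₂ × Fin p₁) (j, ⟨0, hp₁⟩) (by simp [Prod.ext_iff, hij])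
      rw [hMapp, hCLT.1, mul_one] at this
      rw [this, Matrix.one_apply_ne hij]
end

section
/- Let k ≥ p be positive integers, let B be a k×p real matrix satisfying B_{ij} = 0 whenever i < j and B_{ii} ≠ 0 for all i ≤ p, and let D be an invertible p×p real matrix. If the product B·D⁻¹ also satisfies (B·D⁻¹)_{ij} = 0 whenever i < j, then D⁻¹ is a p×p lower triangular matrix (equivalently, D is lower triangular). -/
open Matrix

/-- If `B` (k×p, k ≥ p) has zeros above the diagonal and nonzero diagonal entries, `D` is
invertible, and `B * D⁻¹` also has zeros above the diagonal, then `D⁻¹` is lower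
triangular. -/
theorem rotation_of_trapezoidal_is_lower_triangular {k p : ℕ}
    (hp : 0 < p) (hk : p ≤ k)
    (B : Matrix (Fin k) (Fin p) ℝ) (D : Matrix (Fin p) (Fin p) ℝ)
    (hD : IsUnit D.det)
    (hB0 : ∀ (i : Fin k) (j : Fin p), (i : ℕ) < (j : ℕ) → B i j = 0)
    (hBd : ∀ j : Fin p, B (Fin.castLE hk j) j ≠ 0)
    (hBD0 : ∀ (i : Fin k) (j : Fin p), (i : ℕ) < (j : ℕ) → (B * D⁻¹) i j = 0) :
    ∀ i j : Fin p, i < j → D⁻¹ i j = 0 := by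
  suffices H : ∀ n, ∀ i j : Fin p, (i : ℕ) = n → i < j → D⁻¹ i j = 0 by
    intro i j hij; exact H i i j rfl hij
  intro n
  induction n using Nat.strong_induction_on with
  | _ n IH =>
    intro i j hn hij
    have h := hBD0 (Fin.castLE hk i) j (by simpa using hij)
    rw [Matrix.mul_apply] at h
    have hsum : ∀ l ∈ Finset.univ, l ≠ i → B (Fin.castLE hk i) l * D⁻¹ l j = 0 := by
      intro l _ hl
      rcases lt_or_gt_of_ne hl with hlt | hgt
      · have hD0 : D⁻¹ l j = 0 :=
          IH (l : ℕ) (hn ▸ hlt) l j rfl (lt_trans hlt hij)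
        rw [hD0, mul_zero]
      · rw [hB0 _ _ (by simpa using hgt), zero_mul]
    rw [Finset.sum_eq_single_of_mem i (Finset.mem_univ i) hsum] at h
    exact (mul_eq_zero.mp h).resolve_left (hBd i)
end

section
/- Let Σ_c and Σ̃_c be k×k real matrices and Σ_r and Σ̃_r be n×n real matrices with Σ_c ⊗ Σ_r = Σ̃_c ⊗ Σ̃_r and Σ_c ⊗ Σ_r ≠ 0. Then there exists a nonzero real number m such that Σ̃_c = m·Σ_c and Σ̃_r = m⁻¹·Σ_r. Moreover, if in addition the (1,1) entries satisfy (Σ_c)_{11} = (Σ̃_c)_{11} = 1, then Σ̃_c = Σ_c and Σ̃_r = Σ_r. -/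
open Matrix
open scoped Kronecker

namespace Matrix

variable {K : Type*} [Field K] {l m n p : Type*}
  {A A' : Matrix l m K} {B B' : Matrix n p K}

theorem mul_eq_mul_of_kronecker_eq (h : A ⊗ₖ B = A' ⊗ₖ B') (i : l) (j : m) (a : n) (b : p) :
    A i j * B a b = A' i j * B' a b := by
  simpa only [kronecker_apply] using congrFun (congrFun h (i, a)) (j, b)

theorem eq_smul_left_of_kronecker_eq (h : A ⊗ₖ B = A' ⊗ₖ B') {a : n} {b : p}
    (hB' : B' a b ≠ 0) : A' = (B a b / B' a b) • A := by
  ext i j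
  have := mul_eq_mul_of_kronecker_eq h i j a b
  rw [smul_apply, smul_eq_mul]
  field_simp
  linear_combination -this

theorem eq_smul_right_of_kronecker_eq (h : A ⊗ₖ B = A' ⊗ₖ B') {i : l} {j : m}
    (hA' : A' i j ≠ 0) : B' = (A i j / A' i j) • B := by
  ext a b
  have := mul_eq_mul_of_kronecker_eq h i j a b
  rw [smul_apply, smul_eq_mul]
  field_simp
  linear_combination -this

theorem exists_smul_of_kronecker_eq (h : A ⊗ₖ B = A' ⊗ₖ B') (hne : A ⊗ₖ B ≠ 0) :
    ∃ c : K, c ≠ 0 ∧ A' = c • A ∧ B' = c⁻¹ • B := by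
  obtain ⟨⟨i, a⟩, ⟨j, b⟩, hij⟩ : ∃ r s, (A ⊗ₖ B) r s ≠ 0 := by
    by_contra! h0
    exact hne (ext h0)
  rw [kronecker_apply] at hij
  have hentry := mul_eq_mul_of_kronecker_eq h i j a b
  have hij' : A' i j * B' a b ≠ 0 := hentry ▸ hij
  obtain ⟨hA, hB⟩ := mul_ne_zero_iff.mp hij
  obtain ⟨hA', hB'⟩ := mul_ne_zero_iff.mp hij'
  refine ⟨B a b / B' a b, div_ne_zero hB hB', eq_smul_left_of_kronecker_eq h hB', ?_⟩
  have hscale : A i j / A' i j = (B a b / B' a b)⁻¹ := by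
    field_simp
    linear_combination hentry
  rw [← hscale]
  exact eq_smul_right_of_kronecker_eq h hA'

end Matrix

theorem kronecker_factors_unique_up_to_scale_general {n k : ℕ} (hk : 0 < k)
    (Sc Sct : Matrix (Fin k) (Fin k) ℝ) (Sr Srt : Matrix (Fin n) (Fin n) ℝ)
    (heq : Sc ⊗ₖ Sr = Sct ⊗ₖ Srt)
    (hne : Sc ⊗ₖ Sr ≠ 0) :
    (∃ m : ℝ, m ≠ 0 ∧ Sct = m • Sc ∧ Srt = m⁻¹ • Sr) ∧
      ((Sc ⟨0, hk⟩ ⟨0, hk⟩ = 1 ∧ Sct ⟨0, hk⟩ ⟨0, hk⟩ = 1) → Sct = Sc ∧ Srt = Sr) := by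
  obtain ⟨m, hm0, hSct, hSrt⟩ := exists_smul_of_kronecker_eq heq hne
  refine ⟨⟨m, hm0, hSct, hSrt⟩, fun ⟨h1, h1'⟩ => ?_⟩
  have hm1 : m = 1 := by
    simpa [hSct, h1] using h1'
  subst hm1
  simp [hSct, hSrt]

/-- The factors of a nonzero Kronecker product are determined up to a reciprocal scale
factor; normalizing the (1,1) entry of the column-wise factor to `1` makes them unique. -/
theorem kronecker_factors_unique_up_to_scale {n k : ℕ} (hk : 0 < k) (hn : 0 < n)
    (Sc Sct : Matrix (Fin k) (Fin k) ℝ) (Sr Srt : Matrix (Fin n) (Fin n) ℝ)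
    (heq : Sc ⊗ₖ Sr = Sct ⊗ₖ Srt)
    (hne : Sc ⊗ₖ Sr ≠ 0) :
    (∃ m : ℝ, m ≠ 0 ∧ Sct = m • Sc ∧ Srt = m⁻¹ • Sr) ∧
      ((Sc ⟨0, hk⟩ ⟨0, hk⟩ = 1 ∧ Sct ⟨0, hk⟩ ⟨0, hk⟩ = 1) → Sct = Sc ∧ Srt = Sr) :=
  kronecker_factors_unique_up_to_scale_general hk Sc Sct Sr Srt heq hne
end
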